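/- arXiv:1705.07765 — 2 statements merged into one kernel-verified Lean document; each statement's English description precedes it below -/
import Mathlib

section
/- Let A ∈ ℝ^{n×n} be a symmetric matrix with simple spectrum (n distinct eigenvalues), and let H ≤ Aut(A) be a subgroup whose action on the indices {1,…,n} is transitive. Then H = Aut(A), and DS(A) is convex exact: Aut_conv(A) = conv(Aut(A)). -/
/- Setting: graphs are symmetric real n×n matrices. `pm n σ` is the permutation
matrix of `σ` (entry (i,j) equals 1 iff σ j = i, so it "sends j to σ j").
`DS n` is the set of doubly stochastic matrices, `Aut A` the set of permutation
matrices commuting with `A`, and `AutConv A` its doubly stochastic relaxation. -/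

open Matrix MeasureTheory Finset

noncomputable section

def pm (n : ℕ) (σ : Equiv.Perm (Fin n)) : Matrix (Fin n) (Fin n) ℝ :=
  Matrix.of fun i j => if σ j = i then (1 : ℝ) else 0

def IsPermMatrix {n : ℕ} (P : Matrix (Fin n) (Fin n) ℝ) : Prop :=
  ∃ σ : Equiv.Perm (Fin n), P = pm n σ

def DS (n : ℕ) : Set (Matrix (Fin n) (Fin n) ℝ) :=
  {S | (∀ i j, 0 ≤ S i j) ∧ (∀ i, ∑ j, S i j = 1) ∧ (∀ j, ∑ i, S i j = 1)}

def Aut {n : ℕ} (A : Matrix (Fin n) (Fin n) ℝ) : Set (Matrix (Fin n) (Fin n) ℝ) :=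
  {P | IsPermMatrix P ∧ A * P = P * A}

def AutConv {n : ℕ} (A : Matrix (Fin n) (Fin n) ℝ) : Set (Matrix (Fin n) (Fin n) ℝ) :=
  {S | S ∈ DS n ∧ A * S = S * A}

def ConvexExact {n : ℕ} (A : Matrix (Fin n) (Fin n) ℝ) : Prop :=
  AutConv A = convexHull ℝ (Aut A)

/-- The subgroup `H` of permutations, realized as a set of permutation matrices. -/
def matSet {n : ℕ} (H : Subgroup (Equiv.Perm (Fin n))) : Set (Matrix (Fin n) (Fin n) ℝ) :=
  (pm n) '' (H : Set (Equiv.Perm (Fin n)))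

/-- A real square matrix has simple spectrum: its characteristic polynomial has as many
distinct real roots as the size of the matrix (all eigenvalues real and distinct). -/
def SimpleSpectrum {m : Type*} [Fintype m] [DecidableEq m] (M : Matrix m m ℝ) : Prop :=
  M.charpoly.roots.toFinset.card = Fintype.card m

/-! Since the eigenvalues of `A` are distinct, every matrix commuting with `A` is diagonal in an
eigenbasis of `A`, so the commutant of `A` is commutative and `Aut A` is abelian. A permutation
commuting with the transitive group `H` is determined by its value at a single point, which
forces `Aut A ⊆ H` and makes `H` act regularly. A doubly stochastic `S` commuting with `A`
commutes with `H`, so `S (σ j) j` does not depend on `j`, and `S` is the convex combination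
`∑ σ ∈ H, S (σ a) a • σ`. -/

open Equiv Function

section PermMatrix

variable {n : ℕ}

theorem pm_eq_permMatrix (σ : Perm (Fin n)) : pm n σ = σ⁻¹.permMatrix ℝ := by
  ext i j
  simp [pm, PEquiv.toMatrix_apply, Equiv.eq_symm_apply, eq_comm]

theorem pm_mul (σ τ : Perm (Fin n)) : pm n (σ * τ) = pm n σ * pm n τ := by
  simp only [pm_eq_permMatrix, ← permMatrixHom_apply, map_mul]

theorem pm_injective : Injective (pm n) := by
  intro σ τ h
  ext j : 1
  have := congr_fun₂ h (σ j) j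
  simp only [pm, of_apply, if_true] at this
  split_ifs at this with hτ
  · exact hτ.symm
  · norm_num at this

theorem DS_eq_doublyStochastic : DS n = doublyStochastic ℝ (Fin n) := by
  ext S
  rw [SetLike.mem_coe, mem_doublyStochastic_iff_sum]
  rfl

theorem pm_mem_DS (σ : Perm (Fin n)) : pm n σ ∈ DS n := by
  rw [DS_eq_doublyStochastic, pm_eq_permMatrix]
  exact permMatrix_mem_doublyStochastic

theorem apply_apply_eq_of_commute_pm {S : Matrix (Fin n) (Fin n) ℝ} {π : Perm (Fin n)}
    (h : Commute S (pm n π)) (i j : Fin n) : S (π i) (π j) = S i j := by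
  have := congr_fun₂ h.eq (π i) j
  rw [pm_eq_permMatrix, Perm.permMatrix, PEquiv.toMatrix_toPEquiv_mul,
    PEquiv.mul_toMatrix_toPEquiv] at this
  simpa [Perm.inv_def] using this

end PermMatrix

section CommutingPermutations

variable {α : Type*} {H : Subgroup (Perm α)}

theorem Equiv.Perm.eq_of_apply_eq_of_forall_commute (htrans : ∀ a b, ∃ π ∈ H, π a = b)
    {σ τ : Perm α} (hσ : ∀ π ∈ H, Commute σ π) (hτ : ∀ π ∈ H, Commute τ π) {a : α}
    (h : σ a = τ a) : σ = τ := by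
  ext b
  obtain ⟨π, hπ, rfl⟩ := htrans a b
  rw [← Perm.mul_apply, (hσ π hπ).eq, Perm.mul_apply, h, ← Perm.mul_apply, ← (hτ π hπ).eq,
    Perm.mul_apply]

theorem Equiv.Perm.mem_of_forall_commute (htrans : ∀ a b, ∃ π ∈ H, π a = b)
    (hcomm : ∀ σ ∈ H, ∀ π ∈ H, Commute σ π) {τ : Perm α} (hτ : ∀ π ∈ H, Commute τ π) :
    τ ∈ H := by
  rcases isEmpty_or_nonempty α with _ | ⟨⟨a⟩⟩
  · exact Subsingleton.elim 1 τ ▸ H.one_mem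
  obtain ⟨σ, hσ, hσa⟩ := htrans a (τ a)
  rwa [eq_of_apply_eq_of_forall_commute htrans hτ (hcomm σ hσ) hσa.symm]

end CommutingPermutations

section SimpleSpectrum

variable {m : Type*} [Fintype m] [DecidableEq m]

theorem Matrix.eq_diagonal_of_commute_diagonal {R : Type*} [CommRing R] [NoZeroDivisors R]
    {d : m → R} (hd : Injective d) {M : Matrix m m R} (h : Commute (diagonal d) M) :
    M = diagonal fun i => M i i := by
  ext i j
  rcases eq_or_ne i j with rfl | hij
  · simp
  · have hij' := congr_fun₂ h.eq i j
    rw [diagonal_mul, mul_diagonal] at hij'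
    have : (d i - d j) * M i j = 0 := by rw [sub_mul, hij', mul_comm, sub_self]
    simpa [diagonal_apply_ne _ hij, sub_eq_zero, hd.ne hij] using this

theorem Matrix.IsHermitian.eigenvalues_injective {A : Matrix m m ℝ} (hA : A.IsHermitian)
    (hs : SimpleSpectrum A) : Injective hA.eigenvalues := by
  rw [SimpleSpectrum, hA.roots_charpoly_eq_eigenvalues, Multiset.toFinset_map,
    Finset.val_toFinset, ← Finset.card_univ] at hs
  simpa using Finset.card_image_iff.mp hs

/-- In an eigenbasis of `A`, both `S` and `T` are diagonal. -/
theorem Matrix.IsHermitian.commute_of_commute {A S T : Matrix m m ℝ} (hA : A.IsHermitian)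
    (hs : SimpleSpectrum A) (hS : Commute A S) (hT : Commute A T) : Commute S T := by
  set Φ := Unitary.conjStarAlgAut ℝ _ hA.eigenvectorUnitary
  have hA_diag : Φ.symm A = diagonal (RCLike.ofReal ∘ hA.eigenvalues) :=
    Φ.symm_apply_eq.mpr hA.spectral_theorem
  have hdiag : ∀ M, Commute A M → Φ.symm M = diagonal fun i => Φ.symm M i i := fun M hM =>
    eq_diagonal_of_commute_diagonal (RCLike.ofReal_injective.comp (hA.eigenvalues_injective hs))
      (hA_diag ▸ hM.map Φ.symm)
  have := (commute_diagonal (fun i => Φ.symm S i i) (fun i => Φ.symm T i i)).map Φ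
  rwa [← hdiag S hS, ← hdiag T hT, Φ.apply_symm_apply, Φ.apply_symm_apply] at this

end SimpleSpectrum

section Automorphisms

variable {n : ℕ}

theorem commute_of_pm_mem_Aut {A : Matrix (Fin n) (Fin n) ℝ} (hA : A.IsHermitian)
    (hs : SimpleSpectrum A) {σ τ : Perm (Fin n)} (hσ : pm n σ ∈ Aut A) (hτ : pm n τ ∈ Aut A) :
    Commute σ τ :=
  pm_injective <| by rw [pm_mul, pm_mul]; exact (hA.commute_of_commute hs hσ.2 hτ.2).eq

theorem convex_AutConv (A : Matrix (Fin n) (Fin n) ℝ) : Convex ℝ (AutConv A) := by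
  have hDS : Convex ℝ (DS n) := DS_eq_doublyStochastic ▸ convex_doublyStochastic
  refine hDS.inter (t := {S | A * S = S * A}) ?_
  intro S (hS : A * S = S * A) T (hT : A * T = T * A) a b _ _ _
  change A * (a • S + b • T) = (a • S + b • T) * A
  rw [mul_add, add_mul, mul_smul_comm, mul_smul_comm, smul_mul_assoc, smul_mul_assoc, hS, hT]

/-- `H` acts regularly, so `S` is the combination of the `σ ∈ H` with weights `S (σ a) a`. -/
theorem mem_convexHull_pm_image {H : Subgroup (Perm (Fin n))}
    (htrans : ∀ a b, ∃ π ∈ H, π a = b) (hcomm : ∀ σ ∈ H, ∀ π ∈ H, Commute σ π)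
    {S : Matrix (Fin n) (Fin n) ℝ} (hS : S ∈ DS n) (hSH : ∀ π ∈ H, Commute S (pm n π)) :
    S ∈ convexHull ℝ (pm n '' H) := by
  classical
  rcases isEmpty_or_nonempty (Fin n) with _ | ⟨⟨a⟩⟩
  · exact subset_convexHull ℝ _ ⟨1, H.one_mem, Subsingleton.elim _ _⟩
  set s := (H : Set (Perm (Fin n))).toFinset
  have hs : ∀ σ, σ ∈ s ↔ σ ∈ H := fun σ => by simp [s]
  have huniq : ∀ σ ∈ H, ∀ τ ∈ H, ∀ {j}, σ j = τ j → σ = τ := fun σ hσ τ hτ _ =>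
    Perm.eq_of_apply_eq_of_forall_commute htrans (hcomm σ hσ) (hcomm τ hτ)
  have hentry : ∀ σ ∈ H, ∀ j, S (σ j) j = S (σ a) a := by
    intro σ hσ j
    obtain ⟨π, hπ, rfl⟩ := htrans a j
    rw [← Perm.mul_apply, (hcomm σ hσ π hπ).eq, Perm.mul_apply,
      apply_apply_eq_of_commute_pm (hSH π hπ)]
  have hrepr : S = ∑ σ ∈ s, S (σ a) a • pm n σ := by
    ext i j
    obtain ⟨σ, hσ, rfl⟩ := htrans j i
    rw [Matrix.sum_apply, Finset.sum_eq_single σ]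
    · simp [pm, hentry σ hσ j]
    · intro τ hτ hne
      have : τ j ≠ σ j := fun h => hne (huniq τ ((hs τ).mp hτ) σ hσ h)
      simp [pm, this]
    · exact fun hσs => absurd ((hs σ).mpr hσ) hσs
  have hsum : ∑ σ ∈ s, S (σ a) a = 1 := by
    rw [← hS.2.2 a]
    refine Finset.sum_nbij (· a) (fun _ _ => Finset.mem_univ _) ?_ ?_ fun _ _ => rfl
    · exact fun σ hσ τ hτ => huniq σ ((hs σ).mp hσ) τ ((hs τ).mp hτ)
    · intro i _
      obtain ⟨σ, hσ, hσa⟩ := htrans a i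
      exact ⟨σ, (hs σ).mpr hσ, hσa⟩
  rw [hrepr]
  exact (convex_convexHull ℝ _).sum_mem (fun σ _ => hS.1 _ _) hsum
    fun σ hσ => subset_convexHull ℝ _ ⟨σ, (hs σ).mp hσ, rfl⟩

end Automorphisms

/-- if `A` is symmetric with simple spectrum, and `H` is a subgroup of
`Aut A` acting transitively on the indices, then `H = Aut A` and `DS(A)` is convex
exact. -/
theorem stmt8 {n : ℕ} (A : Matrix (Fin n) (Fin n) ℝ) (hA : A.IsSymm)
    (hsimple : SimpleSpectrum A)
    (H : Subgroup (Equiv.Perm (Fin n)))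
    (hHsub : ∀ σ ∈ H, pm n σ ∈ Aut A)
    (htrans : ∀ i j : Fin n, ∃ σ ∈ H, σ i = j) :
    matSet H = Aut A ∧ ConvexExact A := by
  have hA' : A.IsHermitian := isHermitian_iff_isSymm.mpr hA
  have hcomm : ∀ σ ∈ H, ∀ π ∈ H, Commute σ π := fun σ hσ π hπ =>
    commute_of_pm_mem_Aut hA' hsimple (hHsub σ hσ) (hHsub π hπ)
  have hAut : matSet H = Aut A := by
    refine Set.Subset.antisymm (Set.image_subset_iff.mpr hHsub) ?_
    rintro _ ⟨⟨τ, rfl⟩, hτA⟩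
    refine ⟨τ, Perm.mem_of_forall_commute htrans hcomm fun π hπ => ?_, rfl⟩
    exact commute_of_pm_mem_Aut hA' hsimple ⟨⟨τ, rfl⟩, hτA⟩ (hHsub π hπ)
  refine ⟨hAut, Set.Subset.antisymm ?_ (convexHull_min ?_ (convex_AutConv A))⟩
  · rintro S ⟨hS, hSA⟩
    rw [← hAut]
    exact mem_convexHull_pm_image htrans hcomm hS fun π hπ =>
      hA'.commute_of_commute hsimple hSA (hHsub π hπ).2
  · rintro _ ⟨⟨σ, rfl⟩, hσA⟩
    exact ⟨pm_mem_DS σ, hσA⟩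
end
end

section
/- Let G ≤ Π_n be a subgroup whose orbits on {1,…,n} are I_1,…,I_k with n_j = |I_j|, and suppose that I_r is a full orbit, i.e., n_r = |G|. For P ∈ G and orbits I_i, I_j let P_{ii}, P_{jj} denote the corresponding diagonal permutation blocks of P. For j ≠ r let V_{rj}(G) = {M ∈ ℝ^{n_r × n_j} : M P_{jj} = P_{rr} M and Mᵀ P_{rr} = P_{jj} Mᵀ for all P ∈ G}. Then the set of M ∈ V_{rj}(G) with rank(M) < n_j has measure zero with respect to the dim V_{rj}(G)-dimensional Hausdorff measure on the linear subspace V_{rj}(G); i.e., almost every M ∈ V_{rj}(G) has full rank n_j. -/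
/- Setting: a subgroup `G` of permutations of {0,…,n−1} acts on indices; `IsGOrbit G O`
says the finset `O` is an orbit of that action, and `pmBlock σ O` is the permutation
block of `σ` on `O × O` (entry (i,j) equals 1 iff σ j = i). `Vrj G Or Oj` is the space
V_{rj}(G) of O_r × O_j matrices intertwining the corresponding blocks of every element
of `G`. Measures are Hausdorff measures w.r.t. the Frobenius/Euclidean norm. -/

open Matrix MeasureTheory Finset

noncomputable section

/-- `O` is an orbit of the action of `G` on the indices. -/
def IsGOrbit {n : ℕ} (G : Subgroup (Equiv.Perm (Fin n))) (O : Finset (Fin n)) : Prop :=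
  ∃ i, ∀ x, x ∈ O ↔ ∃ σ ∈ G, σ i = x

/-- The block of the permutation matrix of `σ` on `O × O`. -/
def pmBlock {n : ℕ} (σ : Equiv.Perm (Fin n)) (O : Finset (Fin n)) :
    Matrix O O ℝ :=
  Matrix.of fun i j => if σ (j : Fin n) = (i : Fin n) then (1 : ℝ) else 0

/-- `V_{rj}(G)`: matrices `M` with `M P_{jj} = P_{rr} M` and `Mᵀ P_{rr} = P_{jj} Mᵀ`
for all `P ∈ G`. -/
def Vrj {n : ℕ} (G : Subgroup (Equiv.Perm (Fin n))) (Or Oj : Finset (Fin n)) :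
    Set (Matrix Or Oj ℝ) :=
  {M | ∀ σ ∈ G, M * pmBlock σ Oj = pmBlock σ Or * M ∧
        Mᵀ * pmBlock σ Or = pmBlock σ Oj * Mᵀ}

attribute [local instance] Matrix.frobeniusNormedAddCommGroup

instance matMeasurableSpace {m k : Type*} [Fintype m] [Fintype k] :
    MeasurableSpace (Matrix m k ℝ) := borel _

instance matBorelSpace {m k : Type*} [Fintype m] [Fintype k] :
    @BorelSpace (Matrix m k ℝ) PseudoMetricSpace.toUniformSpace.toTopologicalSpace _ := ⟨rfl⟩

/-! Since `Or` is a full orbit, `G` acts simply transitively on it, so `g • i_r ↦ g • i_j`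
is a well-defined `G`-equivariant surjection `Or → Oj`; its `0/1` matrix lies in `V_{rj}(G)`
and has full column rank. A matrix `M` is rank deficient iff its Gram determinant
`det (Mᵀ M)` vanishes, and in linear coordinates on `V_{rj}(G)` this determinant is a
polynomial, nonzero by the example above. The zero set of a nonzero real polynomial is
Lebesgue-null (induct on the number of variables and apply Fubini, each slice being finite
off the null zero set of the leading coefficient), and a linear parametrisation of
`V_{rj}(G)` is Lipschitz, so it carries null sets to `μH[dim V_{rj}(G)]`-null sets. -/

open MvPolynomial in
theorem MvPolynomial.volume_setOf_eval_eq_zero {d : ℕ} {p : MvPolynomial (Fin d) ℝ}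
    (hp : p ≠ 0) : volume {x | eval x p = 0} = 0 := by
  induction d with
  | zero =>
    rw [eq_C_of_isEmpty p] at hp ⊢
    simp_all
  | succ d ih =>
    set q := finSuccEquiv ℝ d p
    have hq : q.leadingCoeff ≠ 0 := by simpa [q] using hp
    let e := MeasurableEquiv.piFinSuccAbove (fun _ : Fin (d + 1) => ℝ) 0
    let T : Set (ℝ × (Fin d → ℝ)) := e.symm ⁻¹' {x | eval x p = 0}
    have hT : MeasurableSet T :=
      e.symm.measurable (isClosed_eq (continuous_eval p) continuous_const).measurableSet
    have hslice : ∀ y : Fin d → ℝ, eval y q.leadingCoeff ≠ 0 →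
        volume ((fun t => (t, y)) ⁻¹' T) = 0 := by
      intro y hy
      have hqy : q.map (eval y) ≠ 0 := fun h => hy <| by
        rw [Polynomial.leadingCoeff, ← Polynomial.coeff_map, h, Polynomial.coeff_zero]
      refine measure_mono_null (fun t ht => ?_)
        ((Polynomial.finite_setOfPred_isRoot hqy).measure_zero _)
      simp only [Set.mem_preimage, T, e, MeasurableEquiv.piFinSuccAbove_symm_apply,
        Fin.insertNthEquiv, Equiv.coe_fn_mk, Fin.insertNth_zero', Set.mem_ofPred_eq] at ht
      show Polynomial.IsRoot _ _
      rw [Polynomial.IsRoot, ← eval_eq_eval_mv_eval']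
      exact ht
    have hgood : ∀ᵐ y : Fin d → ℝ, eval y q.leadingCoeff ≠ 0 :=
      ae_iff.2 (by simpa using ih hq)
    have hS : e ⁻¹' T = {x | eval x p = 0} := by ext; simp [T]
    rw [← hS, (volume_preserving_piFinSuccAbove _ 0).measure_preimage_equiv,
      Measure.volume_eq_prod, Measure.prod_apply_symm hT]
    exact (lintegral_congr_ae (hgood.mono hslice)).trans lintegral_zero

theorem LinearMap.hausdorffMeasure_image_eq_zero {E : Type*} [NormedAddCommGroup E]
    [Module ℝ E] [IsBoundedSMul ℝ E] [MeasurableSpace E] [BorelSpace E] {ι : Type*} [Fintype ι]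
    (A : (ι → ℝ) →ₗ[ℝ] E) {S : Set (ι → ℝ)} (hS : volume S = 0) :
    μH[Fintype.card ι] (A '' S) = 0 := by
  classical
  have hbound : ∀ x, ‖A x‖ ≤ (∑ i, ‖A (Pi.single i 1)‖) * ‖x‖ := fun x => calc
    ‖A x‖ = ‖∑ i, x i • A (Pi.single i 1)‖ := by
      rw [A.pi_apply_eq_sum_univ]
      congr! with i j
      simp [Pi.single_apply, eq_comm]
    _ ≤ ∑ i, ‖x i‖ * ‖A (Pi.single i 1)‖ :=
      (norm_sum_le _ _).trans (Finset.sum_le_sum fun i _ => norm_smul_le _ _)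
    _ ≤ (∑ i, ‖A (Pi.single i 1)‖) * ‖x‖ := by
      rw [Finset.sum_mul]
      exact Finset.sum_le_sum fun i _ => by
        rw [mul_comm]; exact mul_le_mul_of_nonneg_left (norm_le_pi_norm x i) (norm_nonneg _)
  have hA := AddMonoidHomClass.lipschitz_of_bound A _ hbound
  refine nonpos_iff_eq_zero.1 ((hA.hausdorffMeasure_image_le (Nat.cast_nonneg _) S).trans ?_)
  rw [hausdorffMeasure_pi_real, hS, mul_zero]

open MvPolynomial in
theorem Submodule.hausdorffMeasure_setOf_eq_zero {E : Type*} [NormedAddCommGroup E]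
    [Module ℝ E] [IsBoundedSMul ℝ E] [MeasurableSpace E] [BorelSpace E] (V : Submodule ℝ E)
    [FiniteDimensional ℝ V] {f : E → ℝ}
    (hf : ∀ A : (Fin (Module.finrank ℝ V) → ℝ) →ₗ[ℝ] E, ∃ p : MvPolynomial _ ℝ,
      ∀ x, eval x p = f (A x))
    {v : E} (hv : v ∈ V) (hfv : f v ≠ 0) :
    μH[Module.finrank ℝ V] {w | w ∈ V ∧ f w = 0} = 0 := by
  let b := Module.finBasis ℝ V
  let A := V.subtype ∘ₗ b.equivFun.symm.toLinearMap
  obtain ⟨p, hp⟩ := hf A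
  have hA : ∀ w : V, A (b.equivFun w) = w := fun w => by simp [A]
  have hp0 : p ≠ 0 := by
    rintro rfl
    have := hp (b.equivFun ⟨v, hv⟩)
    rw [hA, map_zero] at this
    exact hfv this.symm
  have hsub : {w | w ∈ V ∧ f w = 0} ⊆ A '' {x | eval x p = 0} := by
    rintro w ⟨hw, hfw⟩
    exact ⟨b.equivFun ⟨w, hw⟩, by rw [Set.mem_ofPred_eq, hp, hA, hfw], hA _⟩
  simpa using measure_mono_null hsub
    (A.hausdorffMeasure_image_eq_zero (MvPolynomial.volume_setOf_eval_eq_zero hp0))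

open MvPolynomial in
theorem Matrix.exists_mvPolynomial_eval_eq_det_transpose_mul_self {R ι m k : Type*}
    [CommRing R] [Fintype ι] [Fintype m] [Fintype k] [DecidableEq k]
    (A : (ι → R) →ₗ[R] Matrix m k R) :
    ∃ p : MvPolynomial ι R, ∀ x, eval x p = ((A x)ᵀ * A x).det := by
  classical
  let P : Matrix m k (MvPolynomial ι R) :=
    of fun c a => ∑ i, X i * C (A (fun j => if i = j then 1 else 0) c a)
  have hP : ∀ x, P.map (eval x) = A x := fun x => by
    ext c a
    simp [P, A.pi_apply_eq_sum_univ x, Matrix.sum_apply]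
  exact ⟨(Pᵀ * P).det, fun x => by
    rw [RingHom.map_det, RingHom.mapMatrix_apply, Matrix.map_mul, Matrix.transpose_map, hP]⟩

theorem Matrix.det_transpose_mul_self_eq_zero_of_rank_lt {R m k : Type*} [Field R]
    [LinearOrder R] [IsStrictOrderedRing R] [Fintype m] [Fintype k] [DecidableEq k]
    {M : Matrix m k R} (hM : M.rank < Fintype.card k) : (Mᵀ * M).det = 0 := by
  by_contra hdet
  have := (Mᵀ * M).rank_of_isUnit ((isUnit_iff_isUnit_det _).2 (isUnit_iff_ne_zero.2 hdet))
  rw [rank_transpose_mul_self] at this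
  omega

theorem Matrix.transpose_mul_self_one_submatrix {R α β : Type*} [CommRing R] [Fintype α]
    [DecidableEq β] (f : α → β) :
    ((1 : Matrix β β R).submatrix f id)ᵀ * (1 : Matrix β β R).submatrix f id =
      diagonal fun b => ((Finset.univ.filter fun a => f a = b).card : R) := by
  ext b b'
  rcases eq_or_ne b b' with rfl | h
  · rw [diagonal_apply_eq, Finset.card_filter, Nat.cast_sum, mul_apply]
    refine Finset.sum_congr rfl fun a _ => ?_
    by_cases hab : f a = b <;> simp [one_apply, hab]
  · rw [diagonal_apply_ne _ h, mul_apply]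
    refine Finset.sum_eq_zero fun a _ => ?_
    by_cases hab : f a = b <;> simp [one_apply, hab, h]

theorem Matrix.det_transpose_mul_self_one_submatrix_ne_zero {R α β : Type*} [CommRing R]
    [NoZeroDivisors R] [CharZero R] [Fintype α] [Fintype β] [DecidableEq β] {f : α → β}
    (hf : Function.Surjective f) :
    (((1 : Matrix β β R).submatrix f id)ᵀ * (1 : Matrix β β R).submatrix f id).det ≠ 0 := by
  rw [transpose_mul_self_one_submatrix, det_diagonal, Finset.prod_ne_zero_iff]
  intro b _
  obtain ⟨a, rfl⟩ := hf b
  exact Nat.cast_ne_zero.2 (Finset.card_ne_zero.2 ⟨a, by simp⟩)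

variable {n : ℕ} {G : Subgroup (Equiv.Perm (Fin n))}

theorem IsGOrbit.apply_mem {O : Finset (Fin n)} (hO : IsGOrbit G O) {σ : Equiv.Perm (Fin n)}
    (hσ : σ ∈ G) {x : Fin n} (hx : x ∈ O) : σ x ∈ O := by
  obtain ⟨i, hi⟩ := hO
  obtain ⟨τ, hτ, rfl⟩ := (hi x).1 hx
  exact (hi _).2 ⟨σ * τ, mul_mem hσ hτ, rfl⟩

theorem mul_pmBlock_apply {ι : Type*} [Fintype ι] {O : Finset (Fin n)} (M : Matrix ι O ℝ)
    (σ : Equiv.Perm (Fin n)) (a : ι) (b : O) (hb : σ b ∈ O) :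
    (M * pmBlock σ O) a b = M a ⟨σ b, hb⟩ := by
  rw [mul_apply, Finset.sum_eq_single ⟨σ b, hb⟩]
  · simp [pmBlock]
  · intro c _ hc
    have hbc : σ b ≠ c := fun h => hc (Subtype.ext h.symm)
    simp [pmBlock, hbc]
  · simp

theorem pmBlock_mul_apply {ι : Type*} [Fintype ι] {O : Finset (Fin n)} (M : Matrix O ι ℝ)
    (σ : Equiv.Perm (Fin n)) (a : O) (b : ι) (ha : σ⁻¹ a ∈ O) :
    (pmBlock σ O * M) a b = M ⟨σ⁻¹ a, ha⟩ b := by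
  rw [mul_apply, Finset.sum_eq_single ⟨σ⁻¹ a, ha⟩]
  · simp [pmBlock]
  · intro c _ hc
    have hca : σ c ≠ a := fun h => hc (Subtype.ext (by simp [← h]))
    simp [pmBlock, hca]
  · simp

variable (G) in
def vrjSubmodule (Or Oj : Finset (Fin n)) : Submodule ℝ (Matrix Or Oj ℝ) where
  carrier := Vrj G Or Oj
  add_mem' hM hM' σ hσ := ⟨by rw [Matrix.add_mul, Matrix.mul_add, (hM σ hσ).1, (hM' σ hσ).1],
    by rw [transpose_add, Matrix.add_mul, Matrix.mul_add, (hM σ hσ).2, (hM' σ hσ).2]⟩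
  zero_mem' σ hσ := by simp
  smul_mem' c M hM σ hσ := ⟨by rw [Matrix.smul_mul, Matrix.mul_smul, (hM σ hσ).1],
    by rw [transpose_smul, Matrix.smul_mul, Matrix.mul_smul, (hM σ hσ).2]⟩

variable {Or Oj : Finset (Fin n)}

theorem one_submatrix_mem_Vrj (hOr : IsGOrbit G Or) (hOj : IsGOrbit G Oj) {f : Or → Oj}
    (hf : ∀ σ ∈ G, ∀ a a' : Or, (a' : Fin n) = σ a → (f a' : Fin n) = σ (f a)) :
    (1 : Matrix Oj Oj ℝ).submatrix f id ∈ Vrj G Or Oj := by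
  intro σ hσ
  constructor
  · ext a b
    have ha := hOr.apply_mem (inv_mem hσ) a.2
    rw [mul_pmBlock_apply _ σ a b (hOj.apply_mem hσ b.2), pmBlock_mul_apply _ σ a b ha]
    have hfa := hf σ hσ ⟨σ⁻¹ a, ha⟩ a (by simp)
    simp only [submatrix_apply, id, one_apply, Subtype.ext_iff, hfa, σ.injective.eq_iff]
  · ext b a
    have hb := hOj.apply_mem (inv_mem hσ) b.2
    rw [mul_pmBlock_apply _ σ b a (hOr.apply_mem hσ a.2), pmBlock_mul_apply _ σ b a hb]
    have hfa := hf σ hσ a ⟨σ a, hOr.apply_mem hσ a.2⟩ rfl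
    simp only [transpose_apply, submatrix_apply, id, one_apply, Subtype.ext_iff, hfa,
      Equiv.Perm.eq_inv_iff_eq]

theorem exists_surjective_equivariant_of_card_eq (hOr : IsGOrbit G Or) (hOj : IsGOrbit G Oj)
    (hfull : Or.card = Nat.card G) :
    ∃ f : Or → Oj, Function.Surjective f ∧
      ∀ σ ∈ G, ∀ a a' : Or, (a' : Fin n) = σ a → (f a' : Fin n) = σ (f a) := by
  obtain ⟨ir, hir⟩ := id hOr
  obtain ⟨ij, hij⟩ := id hOj
  let orbitMap : G → Or := fun τ => ⟨(τ : Equiv.Perm (Fin n)) ir, (hir _).2 ⟨τ, τ.2, rfl⟩⟩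
  have hsurj : Function.Surjective orbitMap := by
    rintro ⟨a, ha⟩
    obtain ⟨τ, hτ, rfl⟩ := (hir a).1 ha
    exact ⟨⟨τ, hτ⟩, rfl⟩
  have hbij : Function.Bijective orbitMap := by
    rw [Nat.bijective_iff_surjective_and_card]
    exact ⟨hsurj, by simp [hfull]⟩
  let e := Equiv.ofBijective orbitMap hbij
  refine ⟨fun a => ⟨(e.symm a : Equiv.Perm (Fin n)) ij, (hij _).2 ⟨_, (e.symm a).2, rfl⟩⟩,
    ?_, ?_⟩
  · rintro ⟨b, hb⟩
    obtain ⟨τ, hτ, rfl⟩ := (hij b).1 hb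
    exact ⟨e ⟨τ, hτ⟩, by simp⟩
  · intro σ hσ a a' ha'
    have hea : (e.symm a : Equiv.Perm (Fin n)) ir = a :=
      congrArg Subtype.val (e.apply_symm_apply a)
    have : e.symm a' = ⟨σ, hσ⟩ * e.symm a := e.symm_apply_eq.2 <| Subtype.ext <| by
      simp [e, orbitMap, Equiv.Perm.mul_apply, hea, ha']
    simp [this]

attribute [local instance] Matrix.frobeniusIsBoundedSMul

theorem stmt11_general {n : ℕ} (G : Subgroup (Equiv.Perm (Fin n)))
    (Or Oj : Finset (Fin n)) (hOr : IsGOrbit G Or) (hOj : IsGOrbit G Oj)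
    (hfull : Or.card = Nat.card G) :
    (μH[(Module.finrank ℝ ↥(Submodule.span ℝ (Vrj G Or Oj)) : ℝ)]).restrict
        (Vrj G Or Oj)
      {M | M ∈ Vrj G Or Oj ∧ (M : Matrix Or Oj ℝ).rank < Oj.card} = 0 := by
  obtain ⟨f, hf_surj, hf_equivariant⟩ := exists_surjective_equivariant_of_card_eq hOr hOj hfull
  have hdet := det_transpose_mul_self_one_submatrix_ne_zero (R := ℝ) hf_surj
  have hnull := (vrjSubmodule G Or Oj).hausdorffMeasure_setOf_eq_zero
    (f := fun M => (Mᵀ * M).det) (fun A => exists_mvPolynomial_eval_eq_det_transpose_mul_self A)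
    (one_submatrix_mem_Vrj hOr hOj hf_equivariant) hdet
  have hspan : Submodule.span ℝ (Vrj G Or Oj) = vrjSubmodule G Or Oj :=
    Submodule.span_eq (vrjSubmodule G Or Oj)
  rw [hspan]
  have hsub : {M | M ∈ Vrj G Or Oj ∧ M.rank < Oj.card} ⊆
      {M | M ∈ vrjSubmodule G Or Oj ∧ (Mᵀ * M).det = 0} := fun M ⟨hM, hrank⟩ =>
    ⟨hM, det_transpose_mul_self_eq_zero_of_rank_lt (by simpa using hrank)⟩
  exact nonpos_iff_eq_zero.1
    ((Measure.restrict_apply_le _ _).trans_eq (measure_mono_null hsub hnull))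

/-- if `Or` is a full orbit (|Or| = |G|) and `Oj ≠ Or` is another orbit,
then almost every `M ∈ V_{rj}(G)` (w.r.t. the `dim V_{rj}(G)`-dimensional Hausdorff
measure on this linear subspace) has full rank `|Oj|`. -/
theorem stmt11 {n : ℕ} (G : Subgroup (Equiv.Perm (Fin n)))
    (Or Oj : Finset (Fin n)) (hOr : IsGOrbit G Or) (hOj : IsGOrbit G Oj)
    (hfull : Or.card = Nat.card G) (hne : Oj ≠ Or) :
    (μH[(Module.finrank ℝ ↥(Submodule.span ℝ (Vrj G Or Oj)) : ℝ)]).restrict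
        (Vrj G Or Oj)
      {M | M ∈ Vrj G Or Oj ∧ (M : Matrix Or Oj ℝ).rank < Oj.card} = 0 :=
  stmt11_general G Or Oj hOr hOj hfull
end
end
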